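/- Flux identity for the ε-Milne problem: Let ε ∈ (0,1) satisfy ε^(1−n) < R_min, and let f be a classical solution of the ε-Milne problem with geometric correction with continuous source S and arbitrary in-flow data. Then for every η ∈ (0,L): d/dη ⟨sin φ, f⟩(η) + 2 F̃(η) ⟨sin φ, f⟩(η) + 2 G(η) ⟨sin φ cos²ψ, f⟩(η) = ⟨S, 1⟩(η). Moreover, the specular reflection condition f(L,φ,ψ) = f(L,−φ,ψ) implies ⟨sin φ, f⟩(L) = 0. -/

import Mathlib

noncomputable section

open Real Set MeasureTheory

namespace MilneStmt

/-- The boundary-layer thickness `L = ε^(-n)`. -/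
def layerL (ε n : ℝ) : ℝ := ε ^ (-n)

/-- The geometric force `F(η,ψ)`. -/
def force (R₁ R₂ ε η ψ : ℝ) : ℝ :=
  -ε * (Real.sin ψ ^ 2 / (R₁ - ε * η) + Real.cos ψ ^ 2 / (R₂ - ε * η))

/-- The domain `D = [0,L] × [-π/2, π/2] × [-π, π]` of the variables `(η, φ, ψ)`. -/
def milneDomain (L : ℝ) : Set (ℝ × ℝ × ℝ) :=
  Icc (0 : ℝ) L ×ˢ Icc (-(π / 2)) (π / 2) ×ˢ Icc (-π) π

/-- The in-flow set `{(φ,ψ) : sin φ > 0, ψ ∈ [-π,π]}` (with `φ` in the velocity range). -/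
def inflowSet : Set (ℝ × ℝ) :=
  {q | 0 < Real.sin q.1 ∧ q.1 ∈ Icc (-(π / 2)) (π / 2) ∧ q.2 ∈ Icc (-π) π}

/-- The angular average `f̄(η)`. -/
def angAvg (f : ℝ × ℝ × ℝ → ℝ) (η : ℝ) : ℝ :=
  (1 / (4 * π)) * ∫ ψ in (-π)..π, ∫ φ in (-(π / 2))..(π / 2), f (η, φ, ψ) * Real.cos φ

/-- Partial derivative in `η`. -/
def dEta (g : ℝ × ℝ × ℝ → ℝ) (p : ℝ × ℝ × ℝ) : ℝ :=
  deriv (fun t => g (t, p.2.1, p.2.2)) p.1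

/-- Partial derivative in `φ`. -/
def dPhi (g : ℝ × ℝ × ℝ → ℝ) (p : ℝ × ℝ × ℝ) : ℝ :=
  deriv (fun t => g (p.1, t, p.2.2)) p.2.1

/-- Partial derivative in `ψ`. -/
def dPsi (g : ℝ × ℝ × ℝ → ℝ) (p : ℝ × ℝ × ℝ) : ℝ :=
  deriv (fun t => g (p.1, p.2.1, t)) p.2.2

/-- A classical solution of the ε-Milne problem with geometric correction,
with in-flow data `h` and source `S`. -/
structure IsMilneSolution (R₁ R₂ ε n : ℝ) (h : ℝ → ℝ → ℝ) (S : ℝ × ℝ × ℝ → ℝ)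
    (f : ℝ × ℝ × ℝ → ℝ) : Prop where
  smooth : ContDiffOn ℝ 1 f (milneDomain (layerL ε n))
  eqn : ∀ p ∈ interior (milneDomain (layerL ε n)),
    Real.sin p.2.1 * dEta f p + force R₁ R₂ ε p.1 p.2.2 * Real.cos p.2.1 * dPhi f p
      + f p - angAvg f p.1 = S p
  inflow : ∀ q ∈ inflowSet, f (0, q.1, q.2) = h q.1 q.2
  reflect : ∀ φ ψ : ℝ, f (layerL ε n, φ, ψ) = f (layerL ε n, -φ, ψ)

/-- The weighted `L²` norm on `D`. -/
def l2Norm (L : ℝ) (g : ℝ × ℝ × ℝ → ℝ) : ℝ :=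
  Real.sqrt (∫ η in (0 : ℝ)..L, ∫ ψ in (-π)..π, ∫ φ in (-(π / 2))..(π / 2),
    g (η, φ, ψ) ^ 2 * Real.cos φ)

/-- The `L^∞` norm (sup over `D`). -/
def linfNorm (L : ℝ) (g : ℝ × ℝ × ℝ → ℝ) : ℝ :=
  ⨆ p ∈ milneDomain L, |g p|

/-- The `L^∞` norm over the in-flow boundary. -/
def inflowLinf (g : ℝ → ℝ → ℝ) : ℝ :=
  ⨆ q ∈ inflowSet, |g q.1 q.2|

/-- The limit value `f_L = (3/(4π)) ∫∫ f(L,φ,ψ) sin²φ cos φ dφ dψ`. -/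
def limitValue (L : ℝ) (f : ℝ × ℝ × ℝ → ℝ) : ℝ :=
  (3 / (4 * π)) * ∫ ψ in (-π)..π, ∫ φ in (-(π / 2))..(π / 2),
    f (L, φ, ψ) * Real.sin φ ^ 2 * Real.cos φ

/-- The data bounds with constants `K` and `M` for in-flow data `h` and source `S`. -/
structure DataBounds (K M L : ℝ) (h : ℝ → ℝ → ℝ) (S : ℝ × ℝ × ℝ → ℝ) : Prop where
  hSmooth : ContDiffOn ℝ 1 (fun q : ℝ × ℝ => h q.1 q.2) inflowSet
  hBound : ∀ q ∈ inflowSet,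
    |h q.1 q.2| + |deriv (fun t => h t q.2) q.1| + |deriv (fun t => h q.1 t) q.2| ≤ M
  sSmooth : ContDiffOn ℝ 1 S (milneDomain L)
  sBound : ∀ p ∈ milneDomain L,
    Real.exp (K * p.1) * (|S p| + |dEta S p| + |dPhi S p| + |dPsi S p|) ≤ M

/-- The angular pairing `⟨a, b⟩(η) = ∫∫ a b cos φ dφ dψ`. -/
def brkt (a b : ℝ × ℝ × ℝ → ℝ) (η : ℝ) : ℝ :=
  ∫ ψ in (-π)..π, ∫ φ in (-(π / 2))..(π / 2), a (η, φ, ψ) * b (η, φ, ψ) * Real.cos φ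

/-- `F̃(η) = -ε/(R₁ - εη)`. -/
def Ftilde (R₁ ε η : ℝ) : ℝ := -ε / (R₁ - ε * η)

/-- `G(η) = -ε(R₁ - R₂)/((R₁ - εη)(R₂ - εη))`. -/
def Gfun (R₁ R₂ ε η : ℝ) : ℝ := -(ε * (R₁ - R₂)) / ((R₁ - ε * η) * (R₂ - ε * η))

end MilneStmt

/-!
Multiply the equation by `cos φ` and integrate over the angles. The collision term `f - f̄`
integrates to zero, the source gives `⟨S, 1⟩`, and since `f` is `C¹` on the compact domain the
`η`-derivative can be taken out of the integral. The force term is integrated by parts in `φ`: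
the weight `cos² φ` vanishes at `φ = ±π/2`, so `∫ cos² φ ∂_φ f dφ = 2 ∫ sin φ f cos φ dφ`, and
splitting `F = F̃ + G cos² ψ` produces the two flux terms. At `η = L` specular reflection makes
`φ ↦ sin φ f(L, φ, ψ) cos φ` odd, so the flux vanishes there.
-/

theorem intervalIntegral_eq_zero_of_odd {E : Type*} [NormedAddCommGroup E] [NormedSpace ℝ E]
    {u : ℝ → E} (hu : ∀ x, u (-x) = -u x) (c : ℝ) : ∫ x in (-c)..c, u x = 0 := by
  have h := intervalIntegral.integral_comp_neg (a := -c) (b := c) u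
  simp only [hu, intervalIntegral.integral_neg, neg_neg] at h
  have h2 : (2 : ℝ) • ∫ x in (-c)..c, u x = 0 := by
    rw [two_smul]; nth_rewrite 1 [← h]; exact neg_add_cancel _
  exact (smul_eq_zero.mp h2).resolve_left two_ne_zero

theorem intervalIntegral_intervalIntegral_eq_setIntegral {E : Type*} [NormedAddCommGroup E]
    [NormedSpace ℝ E] {a b c d : ℝ} (hab : a ≤ b) (hcd : c ≤ d) {g : ℝ × ℝ → E}
    (hg : IntegrableOn g (Ioo a b ×ˢ Ioo c d)) :
    ∫ x in a..b, ∫ y in c..d, g (x, y) = ∫ p in Ioo a b ×ˢ Ioo c d, g p := by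
  simp only [intervalIntegral.integral_of_le hab, intervalIntegral.integral_of_le hcd,
    integral_Ioc_eq_integral_Ioo]
  rw [Measure.volume_eq_prod] at hg ⊢
  exact (setIntegral_prod g hg).symm

theorem integral_cos_sq_mul_deriv {u u' : ℝ → ℝ} (hu : ContinuousOn u (Icc (-(π / 2)) (π / 2)))
    (hderiv : ∀ x ∈ Ioo (-(π / 2)) (π / 2), HasDerivAt u (u' x) x)
    (hu' : IntervalIntegrable u' volume (-(π / 2)) (π / 2)) :
    ∫ x in (-(π / 2))..(π / 2), cos x ^ 2 * u' x
      = 2 * ∫ x in (-(π / 2))..(π / 2), sin x * u x * cos x := by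
  have hle : -(π / 2) ≤ π / 2 := by linarith [pi_pos]
  have hcos (x : ℝ) : HasDerivAt (fun x => cos x ^ 2) (-(2 * cos x * sin x)) x := by
    simpa using (hasDerivAt_cos x).fun_pow 2
  rw [intervalIntegral.integral_mul_deriv_eq_deriv_mul_of_hasDerivAt (by fun_prop)
    (by rwa [uIcc_of_le hle]) (fun x _ => hcos x)
    (by simpa [min_eq_left hle, max_eq_right hle] using hderiv)
    (by apply Continuous.intervalIntegrable; fun_prop) hu',
    ← intervalIntegral.integral_const_mul]
  simp only [cos_neg, cos_pi_div_two, ne_eq, OfNat.ofNat_ne_zero, not_false_eq_true,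
    zero_pow, zero_mul, sub_self, zero_sub, ← intervalIntegral.integral_neg]
  congr 1 with x
  ring

section Partials

variable {E : Type*} [NormedAddCommGroup E] [NormedSpace ℝ E] {f : ℝ × ℝ × ℝ → E}
  {f' : ℝ × ℝ × ℝ →L[ℝ] E} {p : ℝ × ℝ × ℝ}

theorem HasFDerivAt.hasDerivAt_eta (hf : HasFDerivAt f f' p) :
    HasDerivAt (fun t => f (t, p.2.1, p.2.2)) (f' (1, 0, 0)) p.1 :=
  hf.comp_hasDerivAt p.1 ((hasDerivAt_id _).prodMk ((hasDerivAt_const _ _).prodMk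
    (hasDerivAt_const _ _)))

theorem HasFDerivAt.hasDerivAt_phi (hf : HasFDerivAt f f' p) :
    HasDerivAt (fun t => f (p.1, t, p.2.2)) (f' (0, 1, 0)) p.2.1 :=
  hf.comp_hasDerivAt p.2.1 ((hasDerivAt_const _ _).prodMk ((hasDerivAt_id _).prodMk
    (hasDerivAt_const _ _)))

end Partials

theorem DifferentiableOn.hasFDerivAt_fderivWithin {𝕜 E F : Type*} [NontriviallyNormedField 𝕜]
    [NormedAddCommGroup E] [NormedSpace 𝕜 E] [NormedAddCommGroup F] [NormedSpace 𝕜 F]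
    {f : E → F} {s : Set E} {x : E} (hf : DifferentiableOn 𝕜 f s) (hx : x ∈ interior s) :
    HasFDerivAt f (fderivWithin 𝕜 f s x) x := by
  have hs := mem_interior_iff_mem_nhds.mp hx
  rw [fderivWithin_of_mem_nhds hs]
  exact hf.hasFDerivAt hs

namespace MilneStmt

theorem mul_le_rpow_one_sub {ε n η : ℝ} (hε : 0 < ε) (hη : η ≤ layerL ε n) :
    ε * η ≤ ε ^ (1 - n) := by
  calc ε * η ≤ ε * layerL ε n := by gcongr
    _ = ε ^ (1 - n) := by
      rw [layerL, sub_eq_add_neg, rpow_add hε, rpow_one]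

theorem force_eq {R₁ R₂ ε η : ℝ} (h₁ : R₁ - ε * η ≠ 0) (h₂ : R₂ - ε * η ≠ 0) (ψ : ℝ) :
    force R₁ R₂ ε η ψ = Ftilde R₁ ε η + Gfun R₁ R₂ ε η * cos ψ ^ 2 := by
  simp only [force, Ftilde, Gfun, sin_sq]
  field_simp
  ring

@[fun_prop]
theorem continuous_force (R₁ R₂ ε η : ℝ) : Continuous (force R₁ R₂ ε η) := by
  unfold force
  fun_prop

theorem brkt_sin_eq_zero_of_reflect {L : ℝ} {f : ℝ × ℝ × ℝ → ℝ}
    (hf : ∀ φ ψ, f (L, φ, ψ) = f (L, -φ, ψ)) : brkt (fun p => sin p.2.1) f L = 0 := by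
  have hodd (ψ : ℝ) : ∫ φ in (-(π / 2))..(π / 2), sin φ * f (L, φ, ψ) * cos φ = 0 :=
    intervalIntegral_eq_zero_of_odd (fun φ => by rw [sin_neg, cos_neg, ← hf]; ring) _
  simp only [brkt, hodd, intervalIntegral.integral_zero]

/-- The angular variables in the order `(ψ, φ)` of the iterated integrals in `brkt`. -/
def angleBox : Set (ℝ × ℝ) := Ioo (-π) π ×ˢ Ioo (-(π / 2)) (π / 2)

theorem measurableSet_angleBox : MeasurableSet angleBox :=
  measurableSet_Ioo.prod measurableSet_Ioo

theorem volume_angleBox_lt_top : volume angleBox < ⊤ := by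
  rw [angleBox, Measure.volume_eq_prod, Measure.prod_prod]
  exact ENNReal.mul_lt_top measure_Ioo_lt_top measure_Ioo_lt_top

theorem interior_milneDomain (L : ℝ) :
    interior (milneDomain L) = Ioo 0 L ×ˢ Ioo (-(π / 2)) (π / 2) ×ˢ Ioo (-π) π := by
  simp only [milneDomain, interior_prod_eq, interior_Icc]

variable {L η : ℝ}

theorem mapsTo_angleBox (hη : η ∈ Ioo 0 L) :
    MapsTo (fun q : ℝ × ℝ => (η, q.2, q.1)) angleBox (interior (milneDomain L)) := by
  rw [interior_milneDomain]
  exact fun q hq => ⟨hη, hq.2, hq.1⟩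

theorem integrableOn_angleBox {g : ℝ × ℝ × ℝ → ℝ} (hη : η ∈ Icc 0 L)
    (hg : ContinuousOn g (milneDomain L)) :
    IntegrableOn (fun q : ℝ × ℝ => g (η, q.2, q.1)) angleBox := by
  have hmaps : MapsTo (fun q : ℝ × ℝ => (η, q.2, q.1)) (Icc (-π) π ×ˢ Icc (-(π / 2)) (π / 2))
      (milneDomain L) := fun q hq => ⟨hη, hq.2, hq.1⟩
  exact ((hg.comp (by fun_prop) hmaps).integrableOn_compact
    (isCompact_Icc.prod isCompact_Icc)).mono_set (prod_mono Ioo_subset_Icc_self Ioo_subset_Icc_self)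

theorem setIntegral_angleBox {g : ℝ × ℝ → ℝ} (hg : IntegrableOn g angleBox) :
    ∫ q in angleBox, g q = ∫ ψ in (-π)..π, ∫ φ in (-(π / 2))..(π / 2), g (ψ, φ) := by
  have hπ := pi_pos
  exact (intervalIntegral_intervalIntegral_eq_setIntegral (by linarith) (by linarith) hg).symm

theorem brkt_eq_setIntegral {a b : ℝ × ℝ × ℝ → ℝ} (hη : η ∈ Icc 0 L)
    (hab : ContinuousOn (fun p => a p * b p * cos p.2.1) (milneDomain L)) :
    brkt a b η = ∫ q in angleBox, a (η, q.2, q.1) * b (η, q.2, q.1) * cos q.2 :=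
  (setIntegral_angleBox (integrableOn_angleBox hη hab)).symm

variable {f : ℝ × ℝ × ℝ → ℝ}

theorem continuousOn_fderivWithin_apply (hf : ContDiffOn ℝ 1 f (milneDomain L)) (hL : 0 < L)
    (v : ℝ × ℝ × ℝ) :
    ContinuousOn (fun p => fderivWithin ℝ f (milneDomain L) p v) (milneDomain L) := by
  have hπ := pi_pos
  have hD : UniqueDiffOn ℝ (milneDomain L) := (uniqueDiffOn_Icc hL).prod
    ((uniqueDiffOn_Icc (by linarith)).prod (uniqueDiffOn_Icc (by linarith)))
  exact (hf.continuousOn_fderivWithin hD le_rfl).clm_apply continuousOn_const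

theorem hasDerivAt_brkt_sin (hf : ContDiffOn ℝ 1 f (milneDomain L)) (hη : η ∈ Ioo 0 L) :
    HasDerivAt (brkt (fun p => sin p.2.1) f)
      (∫ q in angleBox, sin q.2 * fderivWithin ℝ f (milneDomain L) (η, q.2, q.1) (1, 0, 0)
        * cos q.2) η := by
  set D := milneDomain L
  have hL : 0 < L := hη.1.trans hη.2
  have hf' := continuousOn_fderivWithin_apply hf hL (1, 0, 0)
  obtain ⟨C, hC⟩ :=
    (isCompact_Icc.prod (isCompact_Icc.prod isCompact_Icc)).exists_bound_of_continuousOn hf'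
  have hfc := hf.continuousOn
  have hI : Ioo 0 L ∈ nhds η := Ioo_mem_nhds hη.1 hη.2
  have hF (t : ℝ) (ht : t ∈ Ioo 0 L) :
      IntegrableOn (fun q => sin q.2 * f (t, q.2, q.1) * cos q.2) angleBox :=
    integrableOn_angleBox (g := fun p => sin p.2.1 * f p * cos p.2.1) (Ioo_subset_Icc_self ht)
      (by fun_prop)
  have hF' : IntegrableOn (fun q => sin q.2 * fderivWithin ℝ f D (η, q.2, q.1) (1, 0, 0)
      * cos q.2) angleBox :=
    integrableOn_angleBox (g := fun p => sin p.2.1 * fderivWithin ℝ f D p (1, 0, 0) * cos p.2.1)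
      (Ioo_subset_Icc_self hη) (by fun_prop)
  obtain ⟨-, hderiv⟩ := hasDerivAt_integral_of_dominated_loc_of_deriv_le (bound := fun _ => C)
    (μ := volume.restrict angleBox) hI
    (Filter.eventually_of_mem hI fun t ht => (hF t ht).aestronglyMeasurable) (hF η hη)
    hF'.aestronglyMeasurable
    ((ae_restrict_mem measurableSet_angleBox).mono fun q hq t ht => by
      have hCq := hC _ (interior_subset (mapsTo_angleBox ht hq))
      rw [Real.norm_eq_abs] at hCq ⊢
      rw [abs_mul, abs_mul]
      calc _ ≤ 1 * C * 1 := by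
            gcongr
            exacts [by linarith [(abs_nonneg _).trans hCq], abs_sin_le_one _, abs_cos_le_one _]
        _ = C := by ring)
    (integrableOn_const volume_angleBox_lt_top.ne)
    ((ae_restrict_mem measurableSet_angleBox).mono fun q hq t ht =>
      (((hf.differentiableOn one_ne_zero).hasFDerivAt_fderivWithin
        (mapsTo_angleBox ht hq)).hasDerivAt_eta.const_mul _).mul_const _)
  refine hderiv.congr_of_eventuallyEq (Filter.eventually_of_mem hI fun t ht => ?_)
  exact brkt_eq_setIntegral (Ioo_subset_Icc_self ht) (by fun_prop)

theorem setIntegral_sub_angAvg_mul_cos (hη : η ∈ Icc 0 L) (hf : ContinuousOn f (milneDomain L)) :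
    ∫ q in angleBox, (f (η, q.2, q.1) - angAvg f η) * cos q.2 = 0 := by
  have hint : IntegrableOn (fun q : ℝ × ℝ => f (η, q.2, q.1) * cos q.2) angleBox :=
    integrableOn_angleBox (g := fun p => f p * cos p.2.1) hη (by fun_prop)
  have hcos : IntegrableOn (fun q : ℝ × ℝ => cos q.2) angleBox :=
    integrableOn_angleBox (g := fun p => cos p.2.1) hη (by fun_prop)
  have hf_int : ∫ q in angleBox, f (η, q.2, q.1) * cos q.2 = 4 * π * angAvg f η := by
    rw [angAvg, setIntegral_angleBox hint]
    field_simp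
  have hcos_int : ∫ q in angleBox, cos q.2 = 4 * π := by
    rw [setIntegral_angleBox hcos]
    simp only [integral_cos, sin_pi_div_two, sin_neg, sub_neg_eq_add,
      intervalIntegral.integral_const, smul_eq_mul]
    ring
  simp_rw [sub_mul]
  rw [integral_sub hint (hcos.const_mul _), integral_const_mul, hf_int, hcos_int]
  ring

theorem setIntegral_mul_cos_sq_mul_fderivWithin (hf : ContDiffOn ℝ 1 f (milneDomain L))
    (hη : η ∈ Ioo 0 L) {w : ℝ → ℝ} (hw : Continuous w) :
    ∫ q in angleBox, w q.1 * cos q.2 ^ 2 * fderivWithin ℝ f (milneDomain L) (η, q.2, q.1) (0, 1, 0)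
      = 2 * ∫ q in angleBox, w q.1 * (sin q.2 * f (η, q.2, q.1) * cos q.2) := by
  set D := milneDomain L
  have hπ := pi_pos
  have hL : 0 < L := hη.1.trans hη.2
  have hfc := hf.continuousOn
  have hf' := continuousOn_fderivWithin_apply hf hL (0, 1, 0)
  rw [setIntegral_angleBox (integrableOn_angleBox
      (g := fun p => w p.2.2 * cos p.2.1 ^ 2 * fderivWithin ℝ f D p (0, 1, 0))
      (Ioo_subset_Icc_self hη) (by fun_prop)),
    setIntegral_angleBox (integrableOn_angleBox
      (g := fun p => w p.2.2 * (sin p.2.1 * f p * cos p.2.1)) (Ioo_subset_Icc_self hη)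
      (by fun_prop)),
    ← intervalIntegral.integral_const_mul]
  refine intervalIntegral.integral_congr_Ioo_of_le (by linarith) fun ψ hψ => ?_
  have hmaps : MapsTo (fun φ => (η, φ, ψ)) (Icc (-(π / 2)) (π / 2)) D :=
    fun φ hφ => ⟨Ioo_subset_Icc_self hη, hφ, Ioo_subset_Icc_self hψ⟩
  simp_rw [mul_assoc (w ψ), intervalIntegral.integral_const_mul]
  rw [integral_cos_sq_mul_deriv (hfc.comp (by fun_prop) hmaps)
    (fun φ hφ => ((hf.differentiableOn one_ne_zero).hasFDerivAt_fderivWithin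
      (mapsTo_angleBox hη (show (ψ, φ) ∈ angleBox from ⟨hψ, hφ⟩))).hasDerivAt_phi)
    ((hf'.comp (by fun_prop) hmaps).intervalIntegrable_of_Icc (by linarith))]
  simp only [Function.comp_apply]
  ring

theorem setIntegral_force_mul {R₁ R₂ ε : ℝ} (hη : η ∈ Icc 0 L)
    (hf : ContinuousOn f (milneDomain L)) (h₁ : R₁ - ε * η ≠ 0) (h₂ : R₂ - ε * η ≠ 0) :
    ∫ q in angleBox, force R₁ R₂ ε η q.1 * (sin q.2 * f (η, q.2, q.1) * cos q.2)
      = Ftilde R₁ ε η * brkt (fun p => sin p.2.1) f η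
        + Gfun R₁ R₂ ε η * brkt (fun p => sin p.2.1 * cos p.2.2 ^ 2) f η := by
  have hsin : IntegrableOn (fun q : ℝ × ℝ => sin q.2 * f (η, q.2, q.1) * cos q.2) angleBox :=
    integrableOn_angleBox (g := fun p => sin p.2.1 * f p * cos p.2.1) hη (by fun_prop)
  have hsin_cos : IntegrableOn
      (fun q : ℝ × ℝ => cos q.1 ^ 2 * (sin q.2 * f (η, q.2, q.1) * cos q.2)) angleBox :=
    integrableOn_angleBox (g := fun p => cos p.2.2 ^ 2 * (sin p.2.1 * f p * cos p.2.1)) hη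
      (by fun_prop)
  simp_rw [force_eq h₁ h₂, add_mul, mul_assoc (Gfun R₁ R₂ ε η)]
  rw [integral_add (hsin.const_mul _) (hsin_cos.const_mul _), integral_const_mul,
    integral_const_mul, brkt_eq_setIntegral hη (by fun_prop), brkt_eq_setIntegral hη (by fun_prop)]
  congr 3 with q
  ring

variable {R₁ R₂ ε n : ℝ} {h : ℝ → ℝ → ℝ} {S : ℝ × ℝ × ℝ → ℝ}

theorem IsMilneSolution.eqn_fderivWithin (hf : IsMilneSolution R₁ R₂ ε n h S f)
    {p : ℝ × ℝ × ℝ} (hp : p ∈ interior (milneDomain (layerL ε n))) :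
    sin p.2.1 * fderivWithin ℝ f (milneDomain (layerL ε n)) p (1, 0, 0)
      + force R₁ R₂ ε p.1 p.2.2 * cos p.2.1
        * fderivWithin ℝ f (milneDomain (layerL ε n)) p (0, 1, 0)
      + f p - angAvg f p.1 = S p := by
  have hfp := (hf.smooth.differentiableOn one_ne_zero).hasFDerivAt_fderivWithin hp
  rw [← hfp.hasDerivAt_eta.deriv, ← hfp.hasDerivAt_phi.deriv]
  exact hf.eqn p hp

theorem IsMilneSolution.setIntegral_transport_eq (hf : IsMilneSolution R₁ R₂ ε n h S f)
    (hS : ContinuousOn S (milneDomain (layerL ε n))) (hη : η ∈ Ioo 0 (layerL ε n)) :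
    (∫ q in angleBox,
        sin q.2 * fderivWithin ℝ f (milneDomain (layerL ε n)) (η, q.2, q.1) (1, 0, 0) * cos q.2)
      + ∫ q in angleBox, force R₁ R₂ ε η q.1 * cos q.2 ^ 2
          * fderivWithin ℝ f (milneDomain (layerL ε n)) (η, q.2, q.1) (0, 1, 0)
      = brkt S (fun _ => 1) η := by
  set D := milneDomain (layerL ε n)
  have hηD := Ioo_subset_Icc_self hη
  have hL : 0 < layerL ε n := hη.1.trans hη.2
  have hfc := hf.smooth.continuousOn
  have hf₁ := continuousOn_fderivWithin_apply hf.smooth hL (1, 0, 0)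
  have hf₂ := continuousOn_fderivWithin_apply hf.smooth hL (0, 1, 0)
  rw [← integral_add
      (integrableOn_angleBox (g := fun p => sin p.2.1 * fderivWithin ℝ f D p (1, 0, 0) * cos p.2.1)
        hηD (by fun_prop))
      (integrableOn_angleBox
        (g := fun p => force R₁ R₂ ε η p.2.2 * cos p.2.1 ^ 2 * fderivWithin ℝ f D p (0, 1, 0))
        hηD (by fun_prop)),
    setIntegral_congr_fun measurableSet_angleBox
      (g := fun q => S (η, q.2, q.1) * cos q.2 - (f (η, q.2, q.1) - angAvg f η) * cos q.2)
      fun q hq => by linear_combination cos q.2 * hf.eqn_fderivWithin (mapsTo_angleBox hη hq),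
    integral_sub (integrableOn_angleBox (g := fun p => S p * cos p.2.1) hηD (by fun_prop))
      (integrableOn_angleBox (g := fun p => (f p - angAvg f η) * cos p.2.1) hηD (by fun_prop)),
    setIntegral_sub_angAvg_mul_cos hηD hfc, sub_zero,
    brkt_eq_setIntegral hηD (by fun_prop)]
  simp only [mul_one]

theorem milne_flux_identity_general (R₁ R₂ n ε : ℝ)
    (hε : ε ∈ Ioo (0 : ℝ) 1)
    (hεn : ε ^ (1 - n) < min R₁ R₂)
    (h : ℝ → ℝ → ℝ) (S f : ℝ × ℝ × ℝ → ℝ)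
    (hS : ContinuousOn S (milneDomain (layerL ε n)))
    (hf : IsMilneSolution R₁ R₂ ε n h S f) :
    (∀ η ∈ Ioo (0 : ℝ) (layerL ε n),
      deriv (brkt (fun p => Real.sin p.2.1) f) η
          + 2 * Ftilde R₁ ε η * brkt (fun p => Real.sin p.2.1) f η
          + 2 * Gfun R₁ R₂ ε η *
              brkt (fun p => Real.sin p.2.1 * Real.cos p.2.2 ^ 2) f η
        = brkt S (fun _ => 1) η) ∧
    brkt (fun p => Real.sin p.2.1) f (layerL ε n) = 0 := by
  refine ⟨fun η hη => ?_, brkt_sin_eq_zero_of_reflect hf.reflect⟩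
  have hεη : ε * η < min R₁ R₂ := (mul_le_rpow_one_sub hε.1 hη.2.le).trans_lt hεn
  have h₁ : R₁ - ε * η ≠ 0 := sub_ne_zero.mpr (hεη.trans_le (min_le_left _ _)).ne'
  have h₂ : R₂ - ε * η ≠ 0 := sub_ne_zero.mpr (hεη.trans_le (min_le_right _ _)).ne'
  rw [(hasDerivAt_brkt_sin hf.smooth hη).deriv, ← hf.setIntegral_transport_eq hS hη,
    setIntegral_mul_cos_sq_mul_fderivWithin hf.smooth hη (continuous_force R₁ R₂ ε η),
    setIntegral_force_mul (Ioo_subset_Icc_self hη) hf.smooth.continuousOn h₁ h₂]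
  ring

/-- flux identity for the ε-Milne problem, together with the vanishing
of the flux at `η = L` coming from the specular reflection condition. -/
theorem milne_flux_identity (R₁ R₂ n ε : ℝ) (hR₁ : 0 < R₁) (hR₂ : 0 < R₂)
    (hn : n ∈ Ioo (0 : ℝ) (1 / 2)) (hε : ε ∈ Ioo (0 : ℝ) 1)
    (hεn : ε ^ (1 - n) < min R₁ R₂)
    (h : ℝ → ℝ → ℝ) (S f : ℝ × ℝ × ℝ → ℝ)
    (hS : ContinuousOn S (milneDomain (layerL ε n)))
    (hf : IsMilneSolution R₁ R₂ ε n h S f) :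
    (∀ η ∈ Ioo (0 : ℝ) (layerL ε n),
      deriv (brkt (fun p => Real.sin p.2.1) f) η
          + 2 * Ftilde R₁ ε η * brkt (fun p => Real.sin p.2.1) f η
          + 2 * Gfun R₁ R₂ ε η *
              brkt (fun p => Real.sin p.2.1 * Real.cos p.2.2 ^ 2) f η
        = brkt S (fun _ => 1) η) ∧
    brkt (fun p => Real.sin p.2.1) f (layerL ε n) = 0 :=
  milne_flux_identity_general R₁ R₂ n ε hε hεn h S f hS hf

end MilneStmt
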